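/- arXiv:2304.11160 — 4 statements merged into one kernel-verified Lean document; each statement's English description precedes it below -/
import Mathlib

section
/- Let C = {x in R^n : x_1 >= x_2 >= ... >= x_n} be the standard isotonic cone and P_C the Euclidean projection onto C. For any two vectors a, b in R^n, if a majorizes b in the natural order (sum_{i=1}^k a_i >= sum_{i=1}^k b_i for all k, with equality at k = n), then P_C(a) majorizes P_C(b). -/
/-- Sum of the `k` largest entries of a vector `a : Fin n → ℝ`. -/
noncomputable def topSum {n : ℕ} (a : Fin n → ℝ) (k : ℕ) : ℝ :=
  (((List.ofFn a).mergeSort (· ≥ ·)).take k).sum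

/-- `a` majorizes `b`. -/
def Majorizes {n : ℕ} (a b : Fin n → ℝ) : Prop :=
  (∀ k, 1 ≤ k → k ≤ n → topSum b k ≤ topSum a k) ∧ topSum a n = topSum b n

/-- `a` majorizes `b` in the natural order. -/
def NatMajorizes {n : ℕ} (a b : Fin n → ℝ) : Prop :=
  (∀ k, 1 ≤ k → k ≤ n →
      ∑ i ∈ Finset.univ.filter (fun i : Fin n => (i : ℕ) < k), b i ≤
        ∑ i ∈ Finset.univ.filter (fun i : Fin n => (i : ℕ) < k), a i) ∧
    ∑ i, a i = ∑ i, b i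

/-- The standard isotonic cone `{x : x_1 ≥ x_2 ≥ ⋯ ≥ x_n}`. -/
def isoCone (n : ℕ) : Set (EuclideanSpace ℝ (Fin n)) :=
  {x | ∀ i j : Fin n, i ≤ j → x j ≤ x i}

open scoped RealInnerProductSpace

/-- Prefix sums of the first `k` coordinates. -/
noncomputable def pS {n : ℕ} (x : Fin n → ℝ) (k : ℕ) : ℝ :=
  ∑ i ∈ Finset.univ.filter (fun i : Fin n => (i : ℕ) < k), x i

lemma pS_zero {n : ℕ} (x : Fin n → ℝ) : pS x 0 = 0 := by simp [pS]

lemma pS_n {n : ℕ} (x : Fin n → ℝ) : pS x n = ∑ i, x i := by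
  rw [pS, Finset.filter_true_of_mem]
  intro i _; exact i.isLt

lemma pS_succ {n : ℕ} (x : Fin n → ℝ) {k : ℕ} (hk : k < n) :
    pS x (k + 1) = pS x k + x ⟨k, hk⟩ := by
  have h : Finset.univ.filter (fun i : Fin n => (i : ℕ) < k + 1)
      = insert ⟨k, hk⟩ (Finset.univ.filter (fun i : Fin n => (i : ℕ) < k)) := by
    ext i
    simp only [Finset.mem_filter, Finset.mem_insert, Finset.mem_univ, true_and, Fin.ext_iff]
    omega
  rw [pS, h, Finset.sum_insert (by simp)]
  rw [pS]; ring

/-- Indicator of the first `k` coordinates. -/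
noncomputable def uvec (n k : ℕ) : EuclideanSpace ℝ (Fin n) :=
  WithLp.toLp 2 (fun i => if (i : ℕ) < k then 1 else 0)

lemma inner_uvec {n : ℕ} (v : EuclideanSpace ℝ (Fin n)) (k : ℕ) :
    ⟪v, uvec n k⟫ = pS v k := by
  simp only [PiLp.inner_apply, RCLike.inner_apply, conj_trivial, uvec, WithLp.ofLp_toLp, pS]
  rw [Finset.sum_filter]
  congr 1; funext i; split <;> ring

lemma isoCone_convex (n : ℕ) : Convex ℝ (isoCone n) := by
  intro x hx y hy s t hs ht _ i j hij
  have h1 := hx i j hij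
  have h2 := hy i j hij
  simp only [PiLp.add_apply, PiLp.smul_apply, smul_eq_mul]
  have := mul_le_mul_of_nonneg_left h1 hs
  have := mul_le_mul_of_nonneg_left h2 ht
  linarith

lemma var_ineq {n : ℕ} (a p : EuclideanSpace ℝ (Fin n)) (hp : p ∈ isoCone n)
    (hmin : ∀ y ∈ isoCone n, ‖a - p‖ ≤ ‖a - y‖) :
    ∀ y ∈ isoCone n, ⟪a - p, y - p⟫ ≤ 0 := by
  haveI : Nonempty (isoCone n) := ⟨⟨p, hp⟩⟩
  have heq : ‖a - p‖ = ⨅ w : isoCone n, ‖a - (w : EuclideanSpace ℝ (Fin n))‖ := by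
    have hbdd : BddBelow (Set.range fun w : isoCone n => ‖a - (w : EuclideanSpace ℝ (Fin n))‖) := by
      refine ⟨0, ?_⟩
      rintro _ ⟨w, rfl⟩
      exact norm_nonneg _
    exact le_antisymm (le_ciInf fun w => hmin w w.2) (ciInf_le hbdd ⟨p, hp⟩)
  exact (norm_eq_iInf_iff_real_inner_le_zero (isoCone_convex n) hp).1 heq

section
variable {n : ℕ} {a p : EuclideanSpace ℝ (Fin n)}
  (hp : p ∈ isoCone n)
  (hvar : ∀ y ∈ isoCone n, ⟪a - p, y - p⟫ ≤ 0)

include hp hvar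

lemma prefix_le (k : ℕ) : pS a k ≤ pS p k := by
  have hy : p + uvec n k ∈ isoCone n := by
    intro i j hij
    have h1 := hp i j hij
    have h2 : uvec n k j ≤ uvec n k i := by
      have hnm : (i : ℕ) ≤ j := hij
      by_cases hik : (i : ℕ) < k
      · simp only [uvec, WithLp.ofLp_toLp]
        split <;> simp [hik]
      · have hjk : ¬(j : ℕ) < k := fun h => hik (lt_of_le_of_lt hnm h)
        simp [uvec, hik, hjk]
    simpa using add_le_add h1 h2
  have := hvar _ hy
  rw [add_sub_cancel_left, inner_uvec] at this
  have h2 : (a - p : EuclideanSpace ℝ (Fin n)) = fun i => a i - p i := rfl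
  have h3 : pS (a - p : EuclideanSpace ℝ (Fin n)) k = pS a k - pS p k := by
    rw [h2]; simp [pS, Finset.sum_sub_distrib]
  linarith [h3 ▸ this]

lemma total_ge : pS a n ≥ pS p n := by
  have hy : p - uvec n n ∈ isoCone n := by
    intro i j hij
    have h1 := hp i j hij
    have h2 : uvec n n j = uvec n n i := by simp [uvec, i.isLt, j.isLt]
    simp only [PiLp.sub_apply]
    rw [h2]; linarith
  have := hvar _ hy
  rw [sub_sub_cancel_left, inner_neg_right, inner_uvec] at this
  have h3 : pS (a - p : EuclideanSpace ℝ (Fin n)) n = pS a n - pS p n := by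
    simp [pS, Finset.sum_sub_distrib]
  rw [h3] at this; linarith

lemma slack {j : ℕ} (hj : j + 1 < n) (hgt : pS a (j + 1) < pS p (j + 1)) :
    p ⟨j, by omega⟩ = p ⟨j + 1, hj⟩ := by
  by_contra hne
  set g : ℝ := p ⟨j, by omega⟩ - p ⟨j + 1, hj⟩ with hg
  have hmono := hp ⟨j, by omega⟩ ⟨j + 1, hj⟩ (by simp [Fin.le_def])
  have hgpos : 0 < g := by
    rcases lt_or_eq_of_le hmono with h | h
    · simpa [hg] using sub_pos.mpr h
    · exact absurd h.symm hne
  have hy : p - g • uvec n (j + 1) ∈ isoCone n := by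
    intro i m him
    have h1 := hp i m him
    simp only [PiLp.sub_apply, PiLp.smul_apply, smul_eq_mul, uvec, WithLp.ofLp_toLp]
    have hnm : (i : ℕ) ≤ m := him
    by_cases hi : (i : ℕ) < j + 1 <;> by_cases hm : (m : ℕ) < j + 1
    · simp [hi, hm]; linarith
    · simp [hi, hm]
      have hl1 : p m ≤ p ⟨j + 1, hj⟩ := hp ⟨j + 1, hj⟩ m (by simp [Fin.le_def]; omega)
      have hl2 : p ⟨j, by omega⟩ ≤ p i := hp i ⟨j, by omega⟩ (by simp [Fin.le_def]; omega)
      simp only [hg]; linarith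
    · omega
    · simp [hi, hm]; linarith
  have := hvar _ hy
  rw [sub_sub_cancel_left, inner_neg_right, real_inner_smul_right, inner_uvec] at this
  have h3 : pS (a - p : EuclideanSpace ℝ (Fin n)) (j + 1) = pS a (j + 1) - pS p (j + 1) := by
    simp [pS, Finset.sum_sub_distrib]
  rw [h3] at this
  nlinarith

end

lemma topSum_eq_pS {n : ℕ} (x : Fin n → ℝ) (hx : ∀ i j : Fin n, i ≤ j → x j ≤ x i) (k : ℕ) :
    topSum x k = pS x k := by
  have hsorted : (List.ofFn x).Pairwise (fun a b : ℝ => a ≥ b) := by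
    rw [List.pairwise_ofFn]
    intro i j hij
    exact hx i j (le_of_lt hij)
  have hms : (List.ofFn x).mergeSort (· ≥ ·) = List.ofFn x := by
    apply List.mergeSort_of_pairwise
    exact hsorted.imp (fun h => by simpa using h)
  rw [topSum, hms, List.sum_take_ofFn]
  rfl

/-- Projection onto the isotonic cone preserves majorization in the natural order,
turning it into majorization. -/
theorem stmt3 {n : ℕ} (a b pa pb : EuclideanSpace ℝ (Fin n))
    (hpa : pa ∈ isoCone n) (hpa_min : ∀ y ∈ isoCone n, ‖a - pa‖ ≤ ‖a - y‖)
    (hpb : pb ∈ isoCone n) (hpb_min : ∀ y ∈ isoCone n, ‖b - pb‖ ≤ ‖b - y‖)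
    (hab : NatMajorizes a b) :
    Majorizes pa pb := by
  classical
  have hva := var_ineq a pa hpa hpa_min
  have hvb := var_ineq b pb hpb hpb_min
  have hSa : ∀ k, pS a k ≤ pS pa k := prefix_le hpa hva
  have hSb : ∀ k, pS b k ≤ pS pb k := prefix_le hpb hvb
  have hta : pS pa n = pS a n := le_antisymm (total_ge hpa hva) (hSa n)
  have htb : pS pb n = pS b n := le_antisymm (total_ge hpb hvb) (hSb n)
  have hab1 : ∀ k, 1 ≤ k → k ≤ n → pS b k ≤ pS a k := hab.1
  have habn : pS a n = pS b n := by rw [pS_n, pS_n]; exact hab.2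
  have main : ∀ k, k ≤ n → pS pb k ≤ pS pa k := by
    by_contra hcon
    push_neg at hcon
    obtain ⟨k, hk, hlt⟩ := hcon
    have hex : ∃ m, m ≤ n ∧ pS pa m < pS pb m := ⟨k, hk, hlt⟩
    obtain ⟨hk0n, hk0lt⟩ := Nat.find_spec hex
    have hk0pos : 1 ≤ Nat.find hex := by
      by_contra h0
      have h00 : Nat.find hex = 0 := by omega
      rw [h00, pS_zero, pS_zero] at hk0lt
      exact lt_irrefl 0 hk0lt
    obtain ⟨j0, hj0⟩ : ∃ j0, Nat.find hex = j0 + 1 := ⟨Nat.find hex - 1, by omega⟩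
    have hmin0 : pS pb j0 ≤ pS pa j0 := by
      have hnot := Nat.find_min hex (m := j0) (by omega)
      push_neg at hnot
      exact le_of_not_gt fun hl => absurd (hnot (by omega)) (not_le.mpr hl)
    rw [hj0] at hk0lt hk0n
    have claim : ∀ d (h : j0 + d < n),
        pS pa (j0 + d + 1) < pS pb (j0 + d + 1) ∧ pa ⟨j0 + d, h⟩ ≤ pb ⟨j0 + d, h⟩ := by
      intro d
      induction d with
      | zero =>
        intro h
        have hj0n : j0 < n := by omega
        have e1 := pS_succ pa hj0n
        have e2 := pS_succ pb hj0n
        constructor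
        · show pS pa (j0 + 1) < pS pb (j0 + 1)
          exact hk0lt
        · show pa ⟨j0, hj0n⟩ ≤ pb ⟨j0, hj0n⟩
          have : pS pa (j0 + 1) < pS pb (j0 + 1) := hk0lt
          linarith
      | succ d ih =>
        intro h
        have hd : j0 + d < n := by omega
        obtain ⟨ih1, ih2⟩ := ih hd
        have hmn : j0 + d + 1 < n := by omega
        have hb_lt : pS b (j0 + d + 1) < pS pb (j0 + d + 1) := by
          have h1 : pS b (j0 + d + 1) ≤ pS a (j0 + d + 1) := hab1 _ (by omega) (by omega)
          have h2 := hSa (j0 + d + 1)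
          linarith
        have hslack : pb ⟨j0 + d, hd⟩ = pb ⟨j0 + d + 1, hmn⟩ := slack hpb hvb hmn hb_lt
        have hpa_mono : pa ⟨j0 + d + 1, hmn⟩ ≤ pa ⟨j0 + d, hd⟩ :=
          hpa _ _ (by simp [Fin.le_def])
        have hord : pa ⟨j0 + d + 1, hmn⟩ ≤ pb ⟨j0 + d + 1, hmn⟩ := by
          rw [← hslack]; linarith
        have e1 := pS_succ pa hmn
        have e2 := pS_succ pb hmn
        constructor
        · show pS pa (j0 + d + 1 + 1) < pS pb (j0 + d + 1 + 1)
          linarith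
        · show pa ⟨j0 + d + 1, hmn⟩ ≤ pb ⟨j0 + d + 1, hmn⟩
          exact hord
    have hcond : j0 + (n - (j0 + 1)) < n := by omega
    have hfin := (claim (n - (j0 + 1)) hcond).1
    have hidx : j0 + (n - (j0 + 1)) + 1 = n := by omega
    rw [hidx] at hfin
    rw [hta, htb, habn] at hfin
    exact lt_irrefl _ hfin
  constructor
  · intro k hk1 hkn
    rw [topSum_eq_pS pa hpa k, topSum_eq_pS pb hpb k]
    exact main k hkn
  · rw [topSum_eq_pS pa hpa n, topSum_eq_pS pb hpb n]
    exact hta.trans (habn.trans htb.symm)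
end

section
/- Let theta_1 > theta_2 and let P_{theta} denote the probability measure of an exponential family distribution p_theta(x) = exp(theta x - b(theta)) c(x) with respect to base measure rho. Let Delta: R^2 -> R be a bounded measurable function satisfying Delta(x,y) = -Delta(y,x) for all x,y, and Delta(x,y) >= 0 whenever x > y. Then the double integral of Delta(x,y) with respect to P_{theta_1}(dx) P_{theta_2}(dy) is nonnegative. -/
open MeasureTheory
open scoped ENNReal NNReal

variable {α : Type*} [MeasurableSpace α] {μ : Measure α}

theorem finset_le_lintegral_sum {ι : Type*} (s : Finset ι) (h : ι → α → ℝ≥0∞) :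
    ∑ i ∈ s, ∫⁻ a, h i a ∂μ ≤ ∫⁻ a, ∑ i ∈ s, h i a ∂μ := by
  classical
  induction s using Finset.induction_on with
  | empty => simp
  | insert _ _ hx ih =>
    rename_i i s'
    simp only [Finset.sum_insert hx]
    calc (∫⁻ a, h i a ∂μ) + ∑ j ∈ s', ∫⁻ a, h j a ∂μ
        ≤ (∫⁻ a, h i a ∂μ) + ∫⁻ a, ∑ j ∈ s', h j a ∂μ := by gcongr
      _ ≤ ∫⁻ a, h i a + ∑ j ∈ s', h j a ∂μ := le_lintegral_add _ _

theorem lintegral_withDensity_le {f : α → ℝ≥0∞} {G : α → ℝ≥0∞} (hG : Measurable G) :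
    ∫⁻ a, G a ∂(μ.withDensity f) ≤ ∫⁻ a, G a * f a ∂μ := by
  rw [lintegral_eq_iSup_eapprox_lintegral hG]
  refine iSup_le fun n => ?_
  set φ := SimpleFunc.eapprox G n with hφ
  calc φ.lintegral (μ.withDensity f)
      = ∑ a ∈ φ.range, a * (μ.withDensity f) (φ ⁻¹' {a}) := rfl
    _ = ∑ a ∈ φ.range, ∫⁻ x, a * (φ ⁻¹' {a}).indicator f x ∂μ := by
        refine Finset.sum_congr rfl fun a ha => ?_
        have haf : a ≠ ∞ := by
          obtain ⟨x, hx⟩ := SimpleFunc.mem_range.1 ha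
          exact hx ▸ (SimpleFunc.eapprox_lt_top G n x).ne
        rw [withDensity_apply f (φ.measurableSet_preimage _), ← lintegral_indicator
          (φ.measurableSet_preimage _), lintegral_const_mul' _ _ haf]
    _ ≤ ∫⁻ x, ∑ a ∈ φ.range, a * (φ ⁻¹' {a}).indicator f x ∂μ :=
        finset_le_lintegral_sum _ _
    _ = ∫⁻ x, φ x * f x ∂μ := by
        refine lintegral_congr fun x => ?_
        rw [Finset.sum_eq_single (φ x)]
        · simp [Set.indicator_of_mem, Set.mem_preimage]
        · intro a _ hne
          rw [Set.indicator_of_notMem (by simpa using (Ne.symm hne)), mul_zero]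
        · intro h; exact absurd (φ.mem_range_self x) h
    _ ≤ ∫⁻ x, G x * f x ∂μ := by
        refine lintegral_mono fun x => ?_
        have : φ x ≤ G x := by
          calc φ x ≤ ⨆ n, (SimpleFunc.eapprox G n : α → ℝ≥0∞) x :=
                le_iSup (fun n => (SimpleFunc.eapprox G n : α → ℝ≥0∞) x) n
            _ = G x := SimpleFunc.iSup_eapprox_apply hG x
        exact mul_le_mul_left this _

theorem withDensity_withDensity_le {f g : α → ℝ≥0∞} (hg : Measurable g) :
    (μ.withDensity f).withDensity g ≤ μ.withDensity (fun x => g x * f x) := by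
  refine Measure.le_iff.2 fun s hs => ?_
  rw [withDensity_apply _ hs, withDensity_apply _ hs, ← lintegral_indicator hs,
    ← lintegral_indicator hs]
  calc ∫⁻ x, s.indicator g x ∂(μ.withDensity f)
      ≤ ∫⁻ x, s.indicator g x * f x ∂μ := lintegral_withDensity_le (hg.indicator hs)
    _ = ∫⁻ x, s.indicator (fun x => g x * f x) x ∂μ := by
        refine lintegral_congr fun x => ?_
        by_cases hx : x ∈ s <;> simp [hx]

theorem withDensity_mono_measure {μ ν : Measure α} (h : μ ≤ ν) (g : α → ℝ≥0∞) :
    μ.withDensity g ≤ ν.withDensity g := by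
  refine Measure.le_iff.2 fun s hs => ?_
  rw [withDensity_apply _ hs, withDensity_apply _ hs]
  exact lintegral_mono' (Measure.restrict_mono Set.Subset.rfl h) le_rfl
/-- Truthfulness key lemma: for an exponential family with natural parameters
`θ₁ > θ₂` and an antisymmetric kernel `Δ` that is nonnegative above the diagonal,
the double integral of `Δ` is nonnegative. -/
theorem stmt5 (ρ : Measure ℝ) (b c : ℝ → ℝ) (θ₁ θ₂ : ℝ) (hθ : θ₂ < θ₁)
    (P : ℝ → Measure ℝ)
    (hP : ∀ θ, P θ =
      ρ.withDensity (fun x => ENNReal.ofReal (Real.exp (θ * x - b θ) * c x)))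
    (hP1 : IsProbabilityMeasure (P θ₁)) (hP2 : IsProbabilityMeasure (P θ₂))
    (Δ : ℝ → ℝ → ℝ) (hmeas : Measurable (Function.uncurry Δ))
    (hbdd : ∃ C : ℝ, ∀ x y, |Δ x y| ≤ C)
    (hanti : ∀ x y, Δ x y = -Δ y x)
    (hpos : ∀ x y, y < x → 0 ≤ Δ x y) :
    0 ≤ ∫ x, ∫ y, Δ x y ∂(P θ₂) ∂(P θ₁) := by
  obtain ⟨C, hC⟩ := hbdd
  have hC0 : 0 ≤ C := le_trans (abs_nonneg _) (hC 0 0)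
  set W : ℝ → ℝ := fun x => Real.exp ((θ₁ - θ₂) * x + (b θ₂ - b θ₁)) with hWdef
  set W' : ℝ → ℝ := fun x => Real.exp ((θ₂ - θ₁) * x + (b θ₁ - b θ₂)) with hW'def
  have hWmeas : Measurable W := by fun_prop
  have hW'meas : Measurable W' := by fun_prop
  set w : ℝ → ℝ≥0∞ := fun x => ENNReal.ofReal (W x) with hwdef
  set w' : ℝ → ℝ≥0∞ := fun x => ENNReal.ofReal (W' x) with hw'def
  have hw : Measurable w := hWmeas.ennreal_ofReal
  have hw' : Measurable w' := hW'meas.ennreal_ofReal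
  -- pointwise density identities
  have hkey : ∀ x, w x * ENNReal.ofReal (Real.exp (θ₂ * x - b θ₂) * c x)
      = ENNReal.ofReal (Real.exp (θ₁ * x - b θ₁) * c x) := by
    intro x
    rw [← ENNReal.ofReal_mul (Real.exp_pos _).le, ← mul_assoc, ← Real.exp_add]
    congr 2
    ring_nf
  have hkey' : ∀ x, w' x * ENNReal.ofReal (Real.exp (θ₁ * x - b θ₁) * c x)
      = ENNReal.ofReal (Real.exp (θ₂ * x - b θ₂) * c x) := by
    intro x
    rw [← ENNReal.ofReal_mul (Real.exp_pos _).le, ← mul_assoc, ← Real.exp_add]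
    congr 2
    ring_nf
  -- the key measure identity
  have hident : P θ₁ = (P θ₂).withDensity w := by
    refine le_antisymm ?_ ?_
    · have h1 : (P θ₁).withDensity w' ≤ P θ₂ := by
        rw [hP θ₁, hP θ₂]
        refine le_trans (withDensity_withDensity_le hw') (le_of_eq ?_)
        exact congrArg _ (funext hkey')
      have h3 : ((P θ₁).withDensity w').withDensity w = P θ₁ := by
        rw [← withDensity_mul _ hw' hw]
        have : (w' * w) = 1 := by
          funext x
          simp only [Pi.mul_apply, Pi.one_apply, hwdef, hw'def]
          rw [← ENNReal.ofReal_mul (Real.exp_pos _).le, ← Real.exp_add]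
          have harg : (θ₂ - θ₁) * x + (b θ₁ - b θ₂) + ((θ₁ - θ₂) * x + (b θ₂ - b θ₁)) = 0 := by
            ring
          rw [harg, Real.exp_zero, ENNReal.ofReal_one]
        rw [this, withDensity_one]
      calc P θ₁ = ((P θ₁).withDensity w').withDensity w := h3.symm
        _ ≤ (P θ₂).withDensity w := withDensity_mono_measure h1 w
    · rw [hP θ₂, hP θ₁]
      refine le_trans (withDensity_withDensity_le hw) (le_of_eq ?_)
      exact congrArg _ (funext hkey)
  set ν : Measure ℝ := P θ₂ with hνdef
  have hνprob : IsProbabilityMeasure ν := hP2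
  -- W is integrable w.r.t. ν
  have hlW : ∫⁻ x, ENNReal.ofReal (W x) ∂ν = 1 := by
    have h1 : (ν.withDensity w) Set.univ = 1 := by
      rw [← hident]; exact hP1.measure_univ
    rw [withDensity_apply _ MeasurableSet.univ, Measure.restrict_univ] at h1
    exact h1
  have hWint : Integrable W ν := by
    refine ⟨hWmeas.aestronglyMeasurable, ?_⟩
    rw [hasFiniteIntegral_iff_ofReal (Filter.Eventually.of_forall fun x => (Real.exp_pos _).le)]
    rw [hlW]; exact ENNReal.one_lt_top
  -- integrability on the product
  set π : Measure (ℝ × ℝ) := ν.prod ν with hπdef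
  set H₁ : ℝ × ℝ → ℝ := fun p => W p.1 * Δ p.1 p.2 with hH₁def
  set H₂ : ℝ × ℝ → ℝ := fun p => W p.2 * Δ p.1 p.2 with hH₂def
  have hH₁meas : Measurable H₁ := (hWmeas.comp measurable_fst).mul hmeas
  have hH₂meas : Measurable H₂ := (hWmeas.comp measurable_snd).mul hmeas
  have hWfst : Integrable (fun p : ℝ × ℝ => W p.1) π := by
    refine ⟨(hWmeas.comp measurable_fst).aestronglyMeasurable, ?_⟩
    rw [hasFiniteIntegral_def]
    have hm : Measurable (fun p : ℝ × ℝ => (‖W p.1‖₊ : ℝ≥0∞)) :=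
      ((hWmeas.comp measurable_fst).nnnorm).coe_nnreal_ennreal
    have heq := lintegral_prod (μ := ν) (ν := ν) (fun p : ℝ × ℝ => (‖W p.1‖₊ : ℝ≥0∞)) hm.aemeasurable
    calc ∫⁻ p, (‖W p.1‖₊ : ℝ≥0∞) ∂π = ∫⁻ x, ∫⁻ _, (‖W x‖₊ : ℝ≥0∞) ∂ν ∂ν := heq
      _ = ∫⁻ x, (‖W x‖₊ : ℝ≥0∞) ∂ν := by
          simp only [lintegral_const, measure_univ, mul_one]
      _ < ∞ := (hasFiniteIntegral_def _ _).1 hWint.2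
  have hWsnd : Integrable (fun p : ℝ × ℝ => W p.2) π := by
    refine ⟨(hWmeas.comp measurable_snd).aestronglyMeasurable, ?_⟩
    rw [hasFiniteIntegral_def]
    have hm : Measurable (fun p : ℝ × ℝ => (‖W p.2‖₊ : ℝ≥0∞)) :=
      ((hWmeas.comp measurable_snd).nnnorm).coe_nnreal_ennreal
    have heq := lintegral_prod (μ := ν) (ν := ν) (fun p : ℝ × ℝ => (‖W p.2‖₊ : ℝ≥0∞)) hm.aemeasurable
    calc ∫⁻ p, (‖W p.2‖₊ : ℝ≥0∞) ∂π = ∫⁻ _, ∫⁻ y, (‖W y‖₊ : ℝ≥0∞) ∂ν ∂ν := heq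
      _ = ∫⁻ y, (‖W y‖₊ : ℝ≥0∞) ∂ν := by
          simp only [lintegral_const, measure_univ, mul_one]
      _ < ∞ := (hasFiniteIntegral_def _ _).1 hWint.2
  have hbound : ∀ (p : ℝ × ℝ) (z : ℝ), ‖W z * Δ p.1 p.2‖ ≤ ‖C * W z‖ := by
    intro p z
    rw [Real.norm_eq_abs, Real.norm_eq_abs, abs_mul, abs_mul,
      abs_of_pos (Real.exp_pos _), abs_of_nonneg hC0, mul_comm C (W z)]
    exact mul_le_mul_of_nonneg_left (hC _ _) (Real.exp_pos _).le
  have hH₁int : Integrable H₁ π :=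
    (hWfst.const_mul C).mono hH₁meas.aestronglyMeasurable
      (Filter.Eventually.of_forall fun p => hbound p p.1)
  have hH₂int : Integrable H₂ π :=
    (hWsnd.const_mul C).mono hH₂meas.aestronglyMeasurable
      (Filter.Eventually.of_forall fun p => hbound p p.2)
  -- rewrite the LHS as ∫ H₁ dπ
  have hLHS : ∫ x, ∫ y, Δ x y ∂(P θ₂) ∂(P θ₁) = ∫ p, H₁ p ∂π := by
    rw [hident]
    have hcoe : (ν.withDensity w) = ν.withDensity (fun x => ((W x).toNNReal : ℝ≥0∞)) := rfl
    rw [hcoe, integral_withDensity_eq_integral_smul hWmeas.real_toNNReal]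
    have : ∀ x, (W x).toNNReal • (∫ y, Δ x y ∂ν) = ∫ y, W x * Δ x y ∂ν := by
      intro x
      rw [NNReal.smul_def, smul_eq_mul, Real.coe_toNNReal _ (Real.exp_pos _).le, ← integral_const_mul]
    rw [integral_congr_ae (Filter.Eventually.of_forall this)]
    exact integral_integral hH₁int
  -- swap argument: ∫ H₂ dπ = - ∫ H₁ dπ
  have hswap : ∫ p, H₂ p ∂π = - ∫ p, H₁ p ∂π := by
    have hmap : Measure.map Prod.swap π = π := by
      rw [hπdef, Measure.prod_swap]
    calc ∫ p, H₂ p ∂π = ∫ p, H₂ p ∂(Measure.map Prod.swap π) := by rw [hmap]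
      _ = ∫ p, H₂ (Prod.swap p) ∂π := by
          rw [integral_map measurable_swap.aemeasurable
            (by rw [hmap]; exact hH₂meas.aestronglyMeasurable)]
      _ = ∫ p, - H₁ p ∂π := by
          refine integral_congr_ae (Filter.Eventually.of_forall fun p => ?_)
          simp only [Prod.swap, hH₂def, hH₁def]
          rw [hanti p.2 p.1]
          ring
      _ = - ∫ p, H₁ p ∂π := integral_neg _
  -- pointwise nonnegativity of H₁ - H₂
  have hnn : ∀ p : ℝ × ℝ, 0 ≤ H₁ p - H₂ p := by
    intro p
    have hfac : H₁ p - H₂ p = (W p.1 - W p.2) * Δ p.1 p.2 := by ring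
    rw [hfac]
    rcases lt_trichotomy p.2 p.1 with h | h | h
    · refine mul_nonneg (sub_nonneg.2 ?_) (hpos _ _ h)
      exact Real.exp_le_exp.2 (by nlinarith)
    · have : Δ p.1 p.2 = 0 := by
        have := hanti p.1 p.2; rw [h] at *; linarith [hanti p.2 p.2]
      simp [h, this]
    · have h1 : W p.1 ≤ W p.2 := Real.exp_le_exp.2 (by nlinarith)
      have h2 : Δ p.1 p.2 ≤ 0 := by
        rw [hanti p.1 p.2]
        simpa using hpos p.2 p.1 h
      nlinarith
  have hfin : 0 ≤ ∫ p, (H₁ p - H₂ p) ∂π := integral_nonneg hnn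
  rw [integral_sub hH₁int hH₂int, hswap] at hfin
  rw [hLHS]
  linarith
end

section
/- Let Z be a standard Gaussian random variable and b_1 > 0. Then (4/sqrt(2*pi)) * b_1 + E[((Z + b_1)^2 - b_2^2) * 1{Z <= b_2 - b_1}] >= min{ (4/sqrt(2*pi)) * b_1, 1/2 + (2/sqrt(2*pi)) * b_1 } > 0 for every b_2 <= b_1. -/
open Real MeasureTheory Set Filter

noncomputable def gpdf (z : ℝ) : ℝ := (1 / Real.sqrt (2 * π)) * Real.exp (-z ^ 2 / 2)

lemma sqrt2pi_pos : 0 < Real.sqrt (2 * π) := Real.sqrt_pos.2 (by positivity)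

lemma gpdf_pos (z : ℝ) : 0 < gpdf z := by
  unfold gpdf; positivity

lemma gpdf_zero : gpdf 0 = 1 / Real.sqrt (2 * π) := by simp [gpdf]

lemma gpdf_le (z : ℝ) : gpdf z ≤ 1 / Real.sqrt (2 * π) := by
  unfold gpdf
  have h1 : Real.exp (-z ^ 2 / 2) ≤ 1 := by
    rw [← Real.exp_zero]
    apply Real.exp_le_exp.2; nlinarith [sq_nonneg z]
  have hc : (0:ℝ) ≤ 1 / Real.sqrt (2 * π) := by positivity
  calc (1 / Real.sqrt (2 * π)) * Real.exp (-z ^ 2 / 2) ≤ (1 / Real.sqrt (2 * π)) * 1 :=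
        mul_le_mul_of_nonneg_left h1 hc
    _ = 1 / Real.sqrt (2 * π) := mul_one _

lemma gpdf_eq (z : ℝ) : gpdf z = (1 / Real.sqrt (2 * π)) * Real.exp (-(1/2 : ℝ) * z ^ 2) := by
  unfold gpdf; ring_nf

lemma hasDerivAt_gpdf (z : ℝ) : HasDerivAt gpdf (-z * gpdf z) z := by
  have h : HasDerivAt (fun z : ℝ => -z ^ 2 / 2) (-z) z := by
    have := ((hasDerivAt_pow 2 z).neg).div_const 2
    refine this.congr_deriv ?_; push_cast; ring
  have := (h.exp).const_mul (1 / Real.sqrt (2 * π))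
  refine this.congr_deriv ?_
  unfold gpdf; ring

lemma integrable_gpdf : Integrable gpdf := by
  rw [show gpdf = fun z => (1 / Real.sqrt (2 * π)) * Real.exp (-(1/2 : ℝ) * z ^ 2) from
    funext gpdf_eq]
  exact (integrable_exp_neg_mul_sq (by norm_num : (0:ℝ) < 1/2)).const_mul _

lemma integrable_mul_gpdf : Integrable (fun z => z * gpdf z) := by
  simp_rw [gpdf_eq]
  have := (integrable_mul_exp_neg_mul_sq (by norm_num : (0:ℝ) < 1/2)).const_mul
    (1 / Real.sqrt (2 * π))
  exact this.congr (ae_of_all _ fun z => by ring)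

lemma integrable_sq_gpdf : Integrable (fun z => z ^ 2 * gpdf z) := by
  simp_rw [gpdf_eq]
  have h := (integrable_rpow_mul_exp_neg_mul_sq (by norm_num : (0:ℝ) < 1/2)
    (by norm_num : (-1:ℝ) < 2)).const_mul (1 / Real.sqrt (2 * π))
  apply h.congr (ae_of_all _ fun z => ?_)
  simp only
  have h2 : z ^ (2:ℝ) = z ^ 2 := by
    rw [← Real.rpow_natCast z 2]; norm_num
  rw [h2]; ring

lemma tendsto_exp_sq_atTop : Tendsto (fun y : ℝ => Real.exp (-y ^ 2 / 2)) atTop (nhds 0) := by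
  have h : Tendsto (fun y : ℝ => -y ^ 2 / 2) atTop atBot := by
    apply Tendsto.atBot_div_const (by norm_num : (0:ℝ) < 2)
    exact tendsto_neg_atTop_atBot.comp (tendsto_pow_atTop two_ne_zero)
  exact Real.tendsto_exp_atBot.comp h

lemma tendsto_gpdf_atTop : Tendsto gpdf atTop (nhds 0) := by
  have h := tendsto_exp_sq_atTop.const_mul (1 / Real.sqrt (2 * π))
  rw [mul_zero] at h
  exact h

lemma tendsto_gpdf_atBot : Tendsto gpdf atBot (nhds 0) := by
  have h := tendsto_gpdf_atTop.comp tendsto_neg_atBot_atTop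
  apply h.congr
  intro z
  simp [Function.comp, gpdf, neg_sq]

lemma tendsto_mul_gpdf_atTop : Tendsto (fun y : ℝ => y * gpdf y) atTop (nhds 0) := by
  have hg : Tendsto (fun y : ℝ => (1 / Real.sqrt (2 * π)) * (y ^ 1 * Real.exp (-y)))
      atTop (nhds 0) := by
    have := (tendsto_pow_mul_exp_neg_atTop_nhds_zero 1).const_mul (1 / Real.sqrt (2 * π))
    simpa using this
  apply squeeze_zero' ?_ ?_ hg
  · filter_upwards [eventually_ge_atTop (0:ℝ)] with y hy
    exact mul_nonneg hy (gpdf_pos y).le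
  · filter_upwards [eventually_ge_atTop (2:ℝ)] with y hy
    have h1 : Real.exp (-y ^ 2 / 2) ≤ Real.exp (-y) := by
      apply Real.exp_le_exp.2; nlinarith
    unfold gpdf
    have hy0 : (0:ℝ) ≤ y := by linarith
    have := mul_le_mul_of_nonneg_left h1 hy0
    have hc : (0:ℝ) ≤ 1 / Real.sqrt (2 * π) := by positivity
    calc y * ((1 / Real.sqrt (2 * π)) * Real.exp (-y ^ 2 / 2))
        = (1 / Real.sqrt (2 * π)) * (y * Real.exp (-y ^ 2 / 2)) := by ring
      _ ≤ (1 / Real.sqrt (2 * π)) * (y * Real.exp (-y)) := by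
          apply mul_le_mul_of_nonneg_left _ hc
          exact mul_le_mul_of_nonneg_left h1 hy0
      _ = (1 / Real.sqrt (2 * π)) * (y ^ 1 * Real.exp (-y)) := by ring

lemma tendsto_mul_gpdf_atBot : Tendsto (fun z : ℝ => z * gpdf z) atBot (nhds 0) := by
  have h := (tendsto_mul_gpdf_atTop.comp tendsto_neg_atBot_atTop).neg
  rw [neg_zero] at h
  apply h.congr
  intro z
  simp only [Function.comp]
  have : gpdf (-z) = gpdf z := by simp [gpdf, neg_sq]
  rw [this]; ring

noncomputable def Phi (t : ℝ) : ℝ := ∫ z in Iic t, gpdf z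

lemma Phi_nonneg (t : ℝ) : 0 ≤ Phi t :=
  setIntegral_nonneg measurableSet_Iic fun z _ => (gpdf_pos z).le

lemma integral_total : ∫ z : ℝ, gpdf z = 1 := by
  simp_rw [gpdf_eq]
  rw [integral_const_mul, integral_gaussian]
  rw [show (π / (1/2) : ℝ) = 2 * π by ring]
  rw [one_div, inv_mul_cancel₀ (ne_of_gt sqrt2pi_pos)]

lemma Phi_zero : Phi 0 = 1 / 2 := by
  have hsym : (∫ z in Iic (0:ℝ), gpdf z) = ∫ z in Ioi (0:ℝ), gpdf z := by
    have := integral_comp_neg_Iic (0:ℝ) gpdf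
    rw [neg_zero] at this
    rw [← this]
    congr 1
    funext z
    simp [gpdf, neg_sq]
  have hadd := intervalIntegral.integral_Iic_add_Ioi (b := (0:ℝ))
    integrable_gpdf.integrableOn integrable_gpdf.integrableOn
  rw [integral_total] at hadd
  unfold Phi
  rw [hsym] at hadd ⊢
  linarith

lemma integral_mul_Iic (t : ℝ) : ∫ z in Iic t, z * gpdf z = -gpdf t := by
  have h := integral_Iic_of_hasDerivAt_of_tendsto' (a := t) (m := 0)
    (f := fun z => -gpdf z) (f' := fun z => z * gpdf z)
    (fun x _ => by
      have := (hasDerivAt_gpdf x).neg; simp only [neg_mul, neg_neg] at this; exact this)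
    integrable_mul_gpdf.integrableOn
    (by simpa using tendsto_gpdf_atBot.neg)
  simpa using h

lemma integral_key (b₁ t : ℝ) :
    ∫ z in Iic t, (z ^ 2 + 2 * b₁ * z - 1) * gpdf z = -(t + 2 * b₁) * gpdf t := by
  have hint : Integrable (fun z => (z ^ 2 + 2 * b₁ * z - 1) * gpdf z) := by
    have := (integrable_sq_gpdf.add ((integrable_mul_gpdf).const_mul (2 * b₁))).sub
      integrable_gpdf
    exact this.congr (ae_of_all _ fun z => by
      simp only [Pi.add_apply, Pi.sub_apply]; ring)
  have h := integral_Iic_of_hasDerivAt_of_tendsto' (a := t) (m := 0)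
    (f := fun z => -(z + 2 * b₁) * gpdf z)
    (f' := fun z => (z ^ 2 + 2 * b₁ * z - 1) * gpdf z)
    (fun x _ => ?_) hint.integrableOn ?_
  · simpa using h
  · have hd := (((hasDerivAt_id x).add_const (2 * b₁)).neg).mul (hasDerivAt_gpdf x)
    refine hd.congr_deriv ?_
    simp only [id_eq, Pi.neg_apply]; ring
  · have h1 := (tendsto_mul_gpdf_atBot.neg).sub ((tendsto_gpdf_atBot.const_mul (2 * b₁)))
    simp only [neg_zero, sub_zero, mul_zero] at h1
    apply h1.congr
    intro z
    ring

lemma integral_main (b₁ b₂ t : ℝ) :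
    ∫ z in Iic t, ((z + b₁) ^ 2 - b₂ ^ 2) * gpdf z
      = (1 + b₁ ^ 2 - b₂ ^ 2) * Phi t - (t + 2 * b₁) * gpdf t := by
  have hint1 : Integrable (fun z => (z ^ 2 + 2 * b₁ * z - 1) * gpdf z) := by
    have := (integrable_sq_gpdf.add ((integrable_mul_gpdf).const_mul (2 * b₁))).sub
      integrable_gpdf
    exact this.congr (ae_of_all _ fun z => by
      simp only [Pi.add_apply, Pi.sub_apply]; ring)
  have hint2 : Integrable (fun z => (1 + b₁ ^ 2 - b₂ ^ 2) * gpdf z) :=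
    integrable_gpdf.const_mul _
  have hsplit : ∀ z : ℝ, ((z + b₁) ^ 2 - b₂ ^ 2) * gpdf z
      = (z ^ 2 + 2 * b₁ * z - 1) * gpdf z + (1 + b₁ ^ 2 - b₂ ^ 2) * gpdf z := fun z => by ring
  rw [show (fun z => ((z + b₁) ^ 2 - b₂ ^ 2) * gpdf z) = fun z =>
      (z ^ 2 + 2 * b₁ * z - 1) * gpdf z + (1 + b₁ ^ 2 - b₂ ^ 2) * gpdf z from funext hsplit]
  rw [integral_add hint1.integrableOn hint2.integrableOn, integral_key,
    integral_const_mul]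
  unfold Phi
  ring

lemma Phi_lb {t : ℝ} (ht : t ≤ 0) : 1 / 2 + t * (1 / Real.sqrt (2 * π)) ≤ Phi t := by
  have hdiff : Phi 0 - Phi t = ∫ z in t..0, gpdf z :=
    intervalIntegral.integral_Iic_sub_Iic integrable_gpdf.integrableOn integrable_gpdf.integrableOn
  have hb : ∫ z in t..0, gpdf z ≤ ∫ z in t..0, (1 / Real.sqrt (2 * π)) := by
    apply intervalIntegral.integral_mono_on ht
      (integrable_gpdf.intervalIntegrable) (intervalIntegrable_const)
    intro x _
    exact gpdf_le x
  rw [intervalIntegral.integral_const, smul_eq_mul] at hb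
  rw [Phi_zero] at hdiff
  nlinarith [hdiff, hb]

lemma Phi_mills {t : ℝ} (ht : t < 0) : (-t) * Phi t ≤ gpdf t := by
  have hcomp : Phi t ≤ ∫ z in Iic t, (1 / t) * (z * gpdf z) := by
    unfold Phi
    apply setIntegral_mono_on integrable_gpdf.integrableOn
      ((integrable_mul_gpdf.const_mul (1 / t)).integrableOn) measurableSet_Iic
    intro z hz
    simp only [Iic, mem_setOf_eq] at hz
    have h1 : (1:ℝ) ≤ z / t := (le_div_iff_of_neg ht).2 (by linarith)
    have := mul_le_mul_of_nonneg_right h1 (gpdf_pos z).le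
    calc gpdf z = 1 * gpdf z := by ring
      _ ≤ (z / t) * gpdf z := this
      _ = (1 / t) * (z * gpdf z) := by ring
  rw [integral_const_mul, integral_mul_Iic] at hcomp
  have ht' : 0 < -t := by linarith
  calc (-t) * Phi t ≤ (-t) * (1 / t * -gpdf t) := by
        apply mul_le_mul_of_nonneg_left hcomp ht'.le
    _ = gpdf t := by
        have htne : t ≠ 0 := ne_of_lt ht
        field_simp

/-- The key positivity estimate in the intercept analysis: for `Z ~ N(0,1)`,
`b₁ > 0` and `b₂ ≤ b₁`,
`(4/√(2π)) b₁ + E[((Z+b₁)² - b₂²) 1{Z ≤ b₂ - b₁}] ≥ min{(4/√(2π)) b₁, 1/2 + (2/√(2π)) b₁} > 0`. -/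
theorem stmt13 (b₁ b₂ : ℝ) (hb₁ : 0 < b₁) (hb₂ : b₂ ≤ b₁) :
    min ((4 / Real.sqrt (2 * π)) * b₁) (1 / 2 + (2 / Real.sqrt (2 * π)) * b₁) ≤
      (4 / Real.sqrt (2 * π)) * b₁ +
        ∫ z in Set.Iic (b₂ - b₁),
          ((z + b₁) ^ 2 - b₂ ^ 2) * ((1 / Real.sqrt (2 * π)) * Real.exp (-z ^ 2 / 2)) ∧
    0 < min ((4 / Real.sqrt (2 * π)) * b₁) (1 / 2 + (2 / Real.sqrt (2 * π)) * b₁) := by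
  constructor
  · have hmain : (∫ z in Set.Iic (b₂ - b₁),
        ((z + b₁) ^ 2 - b₂ ^ 2) * ((1 / Real.sqrt (2 * π)) * Real.exp (-z ^ 2 / 2)))
        = (1 + b₁ ^ 2 - b₂ ^ 2) * Phi (b₂ - b₁) - ((b₂ - b₁) + 2 * b₁) * gpdf (b₂ - b₁) :=
      integral_main b₁ b₂ (b₂ - b₁)
    rw [hmain,
      show (4 : ℝ) / Real.sqrt (2 * π) = 4 * (1 / Real.sqrt (2 * π)) by ring,
      show (2 : ℝ) / Real.sqrt (2 * π) = 2 * (1 / Real.sqrt (2 * π)) by ring]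
    set P : ℝ := 1 / Real.sqrt (2 * π) with hP
    have hPpos : 0 < P := div_pos one_pos sqrt2pi_pos
    have ht0 : b₂ - b₁ ≤ 0 := by linarith
    have hΦ0 : 0 ≤ Phi (b₂ - b₁) := Phi_nonneg _
    have hgpos : 0 < gpdf (b₂ - b₁) := gpdf_pos _
    have hgle : gpdf (b₂ - b₁) ≤ P := by
      have := gpdf_le (b₂ - b₁); rw [← hP] at this; exact this
    rcases le_or_gt (b₂ + b₁) 0 with hs | hs
    · -- Case A : b₂ + b₁ ≤ 0, show the integral term is nonneg, use Mills
      have htneg : b₂ - b₁ < 0 := by linarith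
      have hm := Phi_mills htneg
      have key1 : 0 ≤ (1 + b₁ ^ 2 - b₂ ^ 2 - (b₂ + b₁) * (b₁ - b₂)) * Phi (b₂ - b₁) :=
        mul_nonneg (by nlinarith) hΦ0
      have key2 : 0 ≤ (-(b₂ + b₁)) * (gpdf (b₂ - b₁) - (-(b₂ - b₁)) * Phi (b₂ - b₁)) :=
        mul_nonneg (by linarith) (by linarith)
      have hg : 0 ≤ (1 + b₁ ^ 2 - b₂ ^ 2) * Phi (b₂ - b₁)
          - ((b₂ - b₁) + 2 * b₁) * gpdf (b₂ - b₁) := by nlinarith [key1, key2]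
      calc min (4 * P * b₁) (1 / 2 + 2 * P * b₁) ≤ 4 * P * b₁ := min_le_left _ _
        _ ≤ _ := by linarith
    · rcases le_or_gt 0 (1 / 2 + P * (b₂ - b₁)) with hcase | hcase
      · -- Case B
        refine le_trans (min_le_right _ _) ?_
        have hΦlb : 1 / 2 + (b₂ - b₁) * P ≤ Phi (b₂ - b₁) := by
          have := Phi_lb ht0; rw [← hP] at this; exact this
        have k1 : 0 ≤ (1 + b₁ ^ 2 - b₂ ^ 2) * (Phi (b₂ - b₁) - (1 / 2 + (b₂ - b₁) * P)) :=
          mul_nonneg (by nlinarith) (by linarith)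
        have k2 : 0 ≤ (b₂ + b₁) * (P - gpdf (b₂ - b₁)) :=
          mul_nonneg hs.le (by linarith)
        have k3 : 0 ≤ (-((b₂ - b₁) * (b₂ + b₁))) * (1 / 2 + P * (b₂ - b₁)) :=
          mul_nonneg (by nlinarith) hcase
        nlinarith [k1, k2, k3]
      · -- Case C
        refine le_trans (min_le_right _ _) ?_
        have k0 : 0 ≤ (1 + b₁ ^ 2 - b₂ ^ 2) * Phi (b₂ - b₁) :=
          mul_nonneg (by nlinarith) hΦ0
        have k2 : 0 ≤ (b₂ + b₁) * (P - gpdf (b₂ - b₁)) :=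
          mul_nonneg hs.le (by linarith)
        nlinarith [k0, k2, hcase]
  · exact lt_min (by positivity) (by positivity)
end

section
/- Let I_1, ..., I_p be a partition of {1,...,n} into blocks of sizes n_1, ..., n_p, and let X in R^n. Define pi_I as the permutation that lists the indices of I_1 first (sorted so that the X-values are nonincreasing within the block), then I_2, and so on. Then the solution of the least squares problem min sum_i (X_i - mu_i)^2 subject to the coarse ordering constraint mu_{I_1} >= mu_{I_2} >= ... >= mu_{I_p} coincides with the solution of the isotonic regression of X under the total order given by pi_I, i.e., min sum_i (X_i - mu_i)^2 subject to mu_{pi_I(1)} >= ... >= mu_{pi_I(n)}. -/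
open Finset

lemma aux_off {n p : ℕ} (I : Fin p → Finset (Fin n)) {j k : Fin p} (hjk : j < k) :
    (∑ m ∈ Finset.univ.filter (fun m : Fin p => m < j), (I m).card) + (I j).card ≤
      ∑ m ∈ Finset.univ.filter (fun m : Fin p => m < k), (I m).card := by
  have hsub : insert j (Finset.univ.filter (fun m : Fin p => m < j)) ⊆
      Finset.univ.filter (fun m : Fin p => m < k) := by
    intro m hm
    simp only [Finset.mem_insert, Finset.mem_filter, Finset.mem_univ, true_and] at hm ⊢
    rcases hm with rfl | hm
    · exact hjk
    · exact hm.trans hjk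
  have h := Finset.sum_le_sum_of_subset (f := fun m => (I m).card) hsub
  rw [Finset.sum_insert (by simp)] at h
  beta_reduce at h
  omega

lemma aux_unique {n : ℕ} (X μ1 μ2 : Fin n → ℝ)
    (h1 : ∑ i, (X i - μ1 i) ^ 2 ≤ ∑ i, (X i - (μ1 i + μ2 i) / 2) ^ 2)
    (h2 : ∑ i, (X i - μ2 i) ^ 2 ≤ ∑ i, (X i - (μ1 i + μ2 i) / 2) ^ 2) : μ1 = μ2 := by
  have key : ∑ i, (X i - μ1 i) ^ 2 + ∑ i, (X i - μ2 i) ^ 2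
      = 2 * ∑ i, (X i - (μ1 i + μ2 i) / 2) ^ 2 + (1 / 2) * ∑ i, (μ1 i - μ2 i) ^ 2 := by
    rw [Finset.mul_sum, Finset.mul_sum, ← Finset.sum_add_distrib, ← Finset.sum_add_distrib]
    exact Finset.sum_congr rfl fun i _ => by ring
  have hz : ∑ i, (μ1 i - μ2 i) ^ 2 ≤ 0 := by linarith
  have hall := (Finset.sum_eq_zero_iff_of_nonneg
    (fun i _ => sq_nonneg (μ1 i - μ2 i))).mp
    (le_antisymm hz (Finset.sum_nonneg fun i _ => sq_nonneg _))
  funext i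
  have := hall i (Finset.mem_univ i)
  have := pow_eq_zero_iff (n := 2) (by norm_num) |>.mp this
  linarith [this]

lemma aux_sort {n p : ℕ} (I : Fin p → Finset (Fin n))
    (hdisj : ∀ j k : Fin p, j ≠ k → Disjoint (I j) (I k))
    (hcover : ∀ i : Fin n, ∃ j : Fin p, i ∈ I j)
    (X : Fin n → ℝ) (π : Equiv.Perm (Fin n))
    (hblock : ∀ (j : Fin p) (i : Fin n), π i ∈ I j ↔
      (∑ k ∈ Finset.univ.filter (fun k : Fin p => k < j), (I k).card) ≤ (i : ℕ) ∧
      (i : ℕ) <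
        (∑ k ∈ Finset.univ.filter (fun k : Fin p => k < j), (I k).card) + (I j).card)
    (hsort : ∀ i i' : Fin n, i < i' → (∃ j : Fin p, π i ∈ I j ∧ π i' ∈ I j) →
      X (π i') ≤ X (π i))
    (μ : Fin n → ℝ)
    (hμ : ∀ j k : Fin p, j < k → ∀ a ∈ I j, ∀ b ∈ I k, μ b ≤ μ a) :
    ∃ μ' : Fin n → ℝ, (∀ i i' : Fin n, i ≤ i' → μ' (π i') ≤ μ' (π i)) ∧
      ∑ i, (X i - μ' i) ^ 2 ≤ ∑ i, (X i - μ i) ^ 2 := by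
  classical
  set y : Fin n → ℝ := fun i => μ (π i) with hy
  set x : Fin n → ℝ := fun i => X (π i) with hx
  -- block index
  have hbex : ∀ i : Fin n, ∃ j, π i ∈ I j := fun i => hcover (π i)
  set b : Fin n → Fin p := fun i => (hbex i).choose with hbdef
  have hb : ∀ i, π i ∈ I (b i) := fun i => (hbex i).choose_spec
  have hbuniq : ∀ (i : Fin n) (j : Fin p), π i ∈ I j → b i = j := by
    intro i j hj
    by_contra hne
    exact (Finset.disjoint_left.mp (hdisj _ _ hne) (hb i)) hj
  have hbmono : Monotone b := by
    intro i i' hii'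
    by_contra hlt
    push_neg at hlt
    have h1 := ((hblock (b i) i).mp (hb i)).1
    have h2 := ((hblock (b i') i').mp (hb i')).2
    have h3 := aux_off I hlt
    have h4 : (i : ℕ) ≤ (i' : ℕ) := hii'
    omega
  -- sort by (block, -value)
  set key : Fin n → Fin p ×ₗ ℝ := fun i => toLex (b i, -(y i)) with hkeydef
  set σ : Equiv.Perm (Fin n) := Tuple.sort key with hσdef
  have hkey : Monotone (key ∘ σ) := Tuple.monotone_sort key
  have hbσ : ∀ i, b (σ i) = b i := by
    have h1 : Monotone (b ∘ σ) := by
      intro i j hij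
      rcases Prod.Lex.le_iff.mp (hkey hij) with h | h
      · exact le_of_lt h
      · exact le_of_eq h.1
    have h2 := Tuple.unique_monotone (f := b) (σ := σ) (τ := 1) h1 (by simpa using hbmono)
    intro i
    simpa using congrFun h2 i
  set ν : Fin n → ℝ := fun i => y (σ i) with hνdef
  have hνanti : Antitone ν := by
    intro i j hij
    rcases Prod.Lex.le_iff.mp (hkey hij) with h | h
    · exact hμ _ _ h _ (hb (σ i)) _ (hb (σ j))
    · have h2 : -(y (σ i)) ≤ -(y (σ j)) := h.2
      simp only [hνdef]
      linarith
  -- monovary on fibers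
  have hmono : ∀ j : Fin p,
      MonovaryOn x ν (↑(Finset.univ.filter (fun i => b i = j)) : Set (Fin n)) := by
    intro j i hi i' hi' hlt
    simp only [Finset.coe_filter, Set.mem_setOf_eq] at hi hi'
    have hii : i' < i := by
      by_contra hcon
      push_neg at hcon
      exact absurd hlt (not_lt.mpr (hνanti hcon))
    exact hsort i' i hii ⟨j, hi'.2 ▸ hb i', hi.2 ▸ hb i⟩
  -- fiber-preserving restricted inverse permutation
  have hστ : ∀ (j : Fin p) (i : Fin n), b i = j ↔ b (σ⁻¹ i) = j := by
    intro j i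
    rw [← hbσ (σ⁻¹ i), Equiv.Perm.inv_def, Equiv.apply_symm_apply]
  set τ : Fin p → Equiv.Perm (Fin n) :=
    fun j => Equiv.Perm.ofSubtype ((σ⁻¹).subtypePerm (p := fun i => b i = j) (fun i => (hστ j i).symm)) with hτdef
  have hτmem : ∀ (j : Fin p) (i : Fin n), b i = j → τ j i = σ⁻¹ i := by
    intro j i hi
    exact Equiv.Perm.ofSubtype_apply_of_mem ((σ⁻¹).subtypePerm (p := fun i => b i = j) (fun i => (hστ j i).symm)) hi
  have hτsupp : ∀ j : Fin p,
      {i : Fin n | τ j i ≠ i} ⊆ (↑(Finset.univ.filter (fun i => b i = j)) : Set (Fin n)) := by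
    intro j i hi
    simp only [Set.mem_setOf_eq] at hi
    simp only [Finset.coe_filter, Set.mem_setOf_eq, Finset.mem_univ, true_and]
    by_contra hcon
    exact hi (Equiv.Perm.ofSubtype_apply_of_not_mem _ hcon)
  -- rearrangement on each fiber
  have hfiber : ∀ j : Fin p,
      ∑ i ∈ Finset.univ.filter (fun i => b i = j), x i * y i
        ≤ ∑ i ∈ Finset.univ.filter (fun i => b i = j), x i * ν i := by
    intro j
    have h1 := (hmono j).sum_mul_comp_perm_le_sum_mul (σ := τ j) (hτsupp j)
    refine le_trans (le_of_eq (Finset.sum_congr rfl fun i hi => ?_)) h1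
    have hij : b i = j := (Finset.mem_filter.mp hi).2
    rw [hτmem j i hij]
    simp only [hνdef]
    rw [Equiv.Perm.inv_def, Equiv.apply_symm_apply]
  have hxy : ∑ i, x i * y i ≤ ∑ i, x i * ν i := by
    rw [← Finset.sum_fiberwise Finset.univ b (fun i => x i * y i),
        ← Finset.sum_fiberwise Finset.univ b (fun i => x i * ν i)]
    exact Finset.sum_le_sum fun j _ => hfiber j
  have hsq : ∑ i, (ν i) ^ 2 = ∑ i, (y i) ^ 2 := Equiv.sum_comp σ (fun i => (y i) ^ 2)
  refine ⟨fun a => ν (π.symm a), ?_, ?_⟩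
  · intro i i' h
    simp only [Equiv.symm_apply_apply]
    exact hνanti h
  · have hre : ∀ g : Fin n → ℝ,
        ∑ i, (X i - g i) ^ 2 = ∑ i, (X (π i) - g (π i)) ^ 2 :=
      fun g => (Equiv.sum_comp π (fun a => (X a - g a) ^ 2)).symm
    rw [hre (fun a => ν (π.symm a)), hre μ]
    simp only [Equiv.symm_apply_apply]
    have expand : ∀ u v : Fin n → ℝ,
        ∑ i, (u i - v i) ^ 2 = ∑ i, (u i) ^ 2 - 2 * ∑ i, (u i * v i) + ∑ i, (v i) ^ 2 := by
      intro u v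
      rw [Finset.mul_sum, ← Finset.sum_sub_distrib, ← Finset.sum_add_distrib]
      exact Finset.sum_congr rfl fun i _ => by ring
    have e1 : ∑ i, (X (π i) - ν i) ^ 2
        = ∑ i, (x i) ^ 2 - 2 * ∑ i, (x i * ν i) + ∑ i, (ν i) ^ 2 := expand x ν
    have e2 : ∑ i, (X (π i) - μ (π i)) ^ 2
        = ∑ i, (x i) ^ 2 - 2 * ∑ i, (x i * y i) + ∑ i, (y i) ^ 2 := expand x y
    rw [e1, e2]
    linarith

lemma aux_tc {n p : ℕ} (I : Fin p → Finset (Fin n)) (π : Equiv.Perm (Fin n))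
    (hblock : ∀ (j : Fin p) (i : Fin n), π i ∈ I j ↔
      (∑ k ∈ Finset.univ.filter (fun k : Fin p => k < j), (I k).card) ≤ (i : ℕ) ∧
      (i : ℕ) <
        (∑ k ∈ Finset.univ.filter (fun k : Fin p => k < j), (I k).card) + (I j).card)
    (μ : Fin n → ℝ)
    (hμ : ∀ i i' : Fin n, i ≤ i' → μ (π i') ≤ μ (π i)) :
    ∀ j k : Fin p, j < k → ∀ a ∈ I j, ∀ b ∈ I k, μ b ≤ μ a := by
  intro j k hjk a ha b hbk
  have ha' : π (π.symm a) ∈ I j := by rwa [Equiv.apply_symm_apply]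
  have hb' : π (π.symm b) ∈ I k := by rwa [Equiv.apply_symm_apply]
  have h1 := ((hblock j _).mp ha').2
  have h2 := ((hblock k _).mp hb').1
  have h3 := aux_off I hjk
  have hle : π.symm a ≤ π.symm b := by
    rw [Fin.le_def]; omega
  have h4 := hμ _ _ hle
  rwa [Equiv.apply_symm_apply, Equiv.apply_symm_apply] at h4

/-- Coarse isotonic regression reduces to isotonic regression along the data-sorted
total order `π_I`: a vector solves the least squares problem under the coarse block
ordering iff it solves it under the total order given by `π_I`. -/
theorem stmt18 {n p : ℕ} (I : Fin p → Finset (Fin n))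
    (hdisj : ∀ j k : Fin p, j ≠ k → Disjoint (I j) (I k))
    (hcover : ∀ i : Fin n, ∃ j : Fin p, i ∈ I j)
    (X : Fin n → ℝ) (π : Equiv.Perm (Fin n))
    -- `π` lists block `I j` in the positions
    -- `[∑_{k<j} |I k|, ∑_{k<j} |I k| + |I j|)`
    (hblock : ∀ (j : Fin p) (i : Fin n), π i ∈ I j ↔
      (∑ k ∈ Finset.univ.filter (fun k : Fin p => k < j), (I k).card) ≤ (i : ℕ) ∧
      (i : ℕ) <
        (∑ k ∈ Finset.univ.filter (fun k : Fin p => k < j), (I k).card) + (I j).card)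
    -- within each block, `π` sorts the indices so that `X`-values are nonincreasing
    (hsort : ∀ i i' : Fin n, i < i' → (∃ j : Fin p, π i ∈ I j ∧ π i' ∈ I j) →
      X (π i') ≤ X (π i)) :
    ∀ μhat : Fin n → ℝ,
      ((∀ j k : Fin p, j < k → ∀ a ∈ I j, ∀ b ∈ I k, μhat b ≤ μhat a) ∧
        ∀ μ : Fin n → ℝ,
          (∀ j k : Fin p, j < k → ∀ a ∈ I j, ∀ b ∈ I k, μ b ≤ μ a) →
          ∑ i, (X i - μhat i) ^ 2 ≤ ∑ i, (X i - μ i) ^ 2) ↔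
      ((∀ i i' : Fin n, i ≤ i' → μhat (π i') ≤ μhat (π i)) ∧
        ∀ μ : Fin n → ℝ,
          (∀ i i' : Fin n, i ≤ i' → μ (π i') ≤ μ (π i)) →
          ∑ i, (X i - μhat i) ^ 2 ≤ ∑ i, (X i - μ i) ^ 2) := by
  intro μhat
  constructor
  · rintro ⟨hfeas, hmin⟩
    obtain ⟨μ', hμ'feas, hμ'le⟩ := aux_sort I hdisj hcover X π hblock hsort μhat hfeas
    have hμ'coarse := aux_tc I π hblock μ' hμ'feas
    have midfeas : ∀ j k : Fin p, j < k → ∀ a ∈ I j, ∀ b ∈ I k,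
        (fun i => (μhat i + μ' i) / 2) b ≤ (fun i => (μhat i + μ' i) / 2) a := by
      intro j k hjk a ha b hbk
      have h1 := hfeas j k hjk a ha b hbk
      have h2 := hμ'coarse j k hjk a ha b hbk
      dsimp only
      linarith
    have heq : μhat = μ' := by
      apply aux_unique X μhat μ'
      · exact hmin _ midfeas
      · have h2 := hmin _ midfeas
        linarith
    constructor
    · intro i i' h
      rw [heq]
      exact hμ'feas i i' h
    · intro μ hμ
      exact hmin μ (aux_tc I π hblock μ hμ)
  · rintro ⟨hfeas, hmin⟩
    refine ⟨aux_tc I π hblock μhat hfeas, ?_⟩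
    intro μ hμ
    obtain ⟨μ', hμ'feas, hμ'le⟩ := aux_sort I hdisj hcover X π hblock hsort μ hμ
    exact le_trans (hmin μ' hμ'feas) hμ'le
end
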